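/- In ℤ⟨x,y,z⟩, let I be the two-sided ideal generated by yx − 3xy − z, zx − xz + y, zy − yz − x, and let L be the two-sided ideal generated by zy − yz − x, zx − xz + y, yx + xy, 2yz + x, 2xz − y, 2y² − z², 4xy + z, x² − y², z³ − xy. Then 2·L ⊆ I ⊆ L. -/
import Mathlib

lemma aux11 {R : Type} [Ring R] (x y z : R) (J : TwoSidedIdeal R)
    (ha : y * x - 3 * (x * y) - z ∈ J)
    (hb : z * x - x * z + y ∈ J)
    (hc : z * y - y * z - x ∈ J) :
    2 * (x * x) - 2 * (y * y) ∈ J ∧ 8 * (x * y) + 2 * z ∈ J ∧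
    4 * (y * z) + 2 * x ∈ J ∧ 4 * (x * z) - 2 * y ∈ J ∧
    4 * (y * y) - 2 * (z * z) ∈ J ∧ 2 * (z * z * z) - 2 * (x * y) ∈ J := by
  have h8 : (2*(x*x) - 2*(y*y)) ∈ J := by
    have e : (2*(x*x) - 2*(y*y)) = (1 * 1) * ((y*x - 3*(x*y) - z) * (z)) + (-3 * 1) * ((z*x - x*z + y) * (y)) + (1 * 1) * ((z*y - y*z - x) * (x)) + (-3 * (x)) * ((z*y - y*z - x) * 1) + (1 * (y)) * ((z*x - x*z + y) * 1) + (-1 * (z)) * ((y*x - 3*(x*y) - z) * 1) := by noncomm_ring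
    rw [e]
    exact J.add_mem (J.add_mem (J.add_mem (J.add_mem (J.add_mem (J.mul_mem_left _ _ (J.mul_mem_right _ _ ha)) (J.mul_mem_left _ _ (J.mul_mem_right _ _ hb))) (J.mul_mem_left _ _ (J.mul_mem_right _ _ hc))) (J.mul_mem_left _ _ (J.mul_mem_right _ _ hc))) (J.mul_mem_left _ _ (J.mul_mem_right _ _ hb))) (J.mul_mem_left _ _ (J.mul_mem_right _ _ ha))
  have h7 : (8*(x*y) + 2*z) ∈ J := by
    have e : (8*(x*y) + 2*z) = (-2 * 1) * ((y*x - 3*(x*y) - z) * 1) + (54 * 1) * ((y*x - 3*(x*y) - z) * (x*x)) + (-54 * 1) * ((y*x - 3*(x*y) - z) * (y*y)) + (-8 * 1) * ((z*x - x*z + y) * (x)) + (8 * 1) * ((z*y - y*z - x) * (y)) + (-9 * 1) * ((2*(x*x) - 2*(y*y)) * (x*y)) + (27 * 1) * ((2*(x*x) - 2*(y*y)) * (y*x)) + (5 * 1) * ((2*(x*x) - 2*(y*y)) * (z)) + (18 * (x)) * ((y*x - 3*(x*y) - z) * (x)) + (10 * (x)) * ((z*x - x*z + y) * 1) + (9 *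 (x)) * ((2*(x*x) - 2*(y*y)) * (y)) + (72 * (x*y)) * ((2*(x*x) - 2*(y*y)) * 1) + (-18 * (y)) * ((y*x - 3*(x*y) - z) * (y)) + (-10 * (y)) * ((z*y - y*z - x) * 1) + (-27 * (y)) * ((2*(x*x) - 2*(y*y)) * (x)) + (31 * (z)) * ((2*(x*x) - 2*(y*y)) * 1) := by noncomm_ring
    rw [e]
    exact J.add_mem (J.add_mem (J.add_mem (J.add_mem (J.add_mem (J.add_mem (J.add_mem (J.add_mem (J.add_mem (J.add_mem (J.add_mem (J.add_mem (J.add_mem (J.add_mem (J.add_mem (J.mul_mem_left _ _ (J.mul_mem_right _ _ ha)) (J.mul_mem_left _ _ (J.mul_mem_right _ _ ha))) (J.mul_mem_left _ _ (J.mul_mem_right _ _ ha))) (J.mul_mem_left _ _ (J.mul_mem_right _ _ hb))) (J.mul_mem_left _ _ (J.mul_mem_right _ _ hc))) (J.mul_mem_left _ _ (J.mul_mem_right _ _ h8))) (J.mul_mem_left _ _ (J.mul_mem_right _ _ h8))) (J.mul_mem_left _ _ (J.mul_mem_right _ _ h8))) (J.mul_mem_left _ _ (J.mul_mem_right _ _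 ha))) (J.mul_mem_left _ _ (J.mul_mem_right _ _ hb))) (J.mul_mem_left _ _ (J.mul_mem_right _ _ h8))) (J.mul_mem_left _ _ (J.mul_mem_right _ _ h8))) (J.mul_mem_left _ _ (J.mul_mem_right _ _ ha))) (J.mul_mem_left _ _ (J.mul_mem_right _ _ hc))) (J.mul_mem_left _ _ (J.mul_mem_right _ _ h8))) (J.mul_mem_left _ _ (J.mul_mem_right _ _ h8))
  have h4 : (4*(y*z) + 2*x) ∈ J := by
    have e : (4*(y*z) + 2*x) = (-6 * 1) * ((y*x - 3*(x*y) - z) * (y)) + (-2 * 1) * ((z*y - y*z - x) * 1) + (-2 * 1) * ((8*(x*y) + 2*z) * (y)) + (-1 * 1) * ((2*(x*x) - 2*(y*y)) * (x)) + (1 * (x)) * ((2*(x*x) - 2*(y*y)) * 1) + (-2 * (y)) * ((y*x - 3*(x*y) - z) * 1) := by noncomm_ring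
    rw [e]
    exact J.add_mem (J.add_mem (J.add_mem (J.add_mem (J.add_mem (J.mul_mem_left _ _ (J.mul_mem_right _ _ ha)) (J.mul_mem_left _ _ (J.mul_mem_right _ _ hc))) (J.mul_mem_left _ _ (J.mul_mem_right _ _ h7))) (J.mul_mem_left _ _ (J.mul_mem_right _ _ h8))) (J.mul_mem_left _ _ (J.mul_mem_right _ _ h8))) (J.mul_mem_left _ _ (J.mul_mem_right _ _ ha))
  have h5 : (4*(x*z) - 2*y) ∈ J := by
    have e : (4*(x*z) - 2*y) = (-2 * 1) * ((y*x - 3*(x*y) - z) * (x)) + (-2 * 1) * ((z*x - x*z + y) * 1) + (-1 * 1) * ((2*(x*x) - 2*(y*y)) * (y)) + (-6 * (x)) * ((y*x - 3*(x*y) - z) * 1) + (-2 * (x)) * ((8*(x*y) + 2*z) * 1) + (1 * (y)) * ((2*(x*x) - 2*(y*y)) * 1) := by noncomm_ring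
    rw [e]
    exact J.add_mem (J.add_mem (J.add_mem (J.add_mem (J.add_mem (J.mul_mem_left _ _ (J.mul_mem_right _ _ ha)) (J.mul_mem_left _ _ (J.mul_mem_right _ _ hb))) (J.mul_mem_left _ _ (J.mul_mem_right _ _ h8))) (J.mul_mem_left _ _ (J.mul_mem_right _ _ ha))) (J.mul_mem_left _ _ (J.mul_mem_right _ _ h7))) (J.mul_mem_left _ _ (J.mul_mem_right _ _ h8))
  have h6 : (4*(y*y) - 2*(z*z)) ∈ J := by
    have e : (4*(y*y) - 2*(z*z)) = (12 * 1) * ((y*x - 3*(x*y) - z) * (z)) + (-3 * 1) * ((4*(y*z) + 2*x) * (x)) + (4 * 1) * ((4*(x*z) - 2*y) * (y)) + (5 * 1) * ((8*(x*y) + 2*z) * (z)) + (-16 * (x)) * ((z*y - y*z - x) * 1) + (-5 * (x)) * ((4*(y*z) + 2*x) * 1) + (12 * (y)) * ((z*x - x*z + y) * 1) := by noncomm_ring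
    rw [e]
    exact J.add_mem (J.add_mem (J.add_mem (J.add_mem (J.add_mem (J.add_mem (J.mul_mem_left _ _ (J.mul_mem_right _ _ ha)) (J.mul_mem_left _ _ (J.mul_mem_right _ _ h4))) (J.mul_mem_left _ _ (J.mul_mem_right _ _ h5))) (J.mul_mem_left _ _ (J.mul_mem_right _ _ h7))) (J.mul_mem_left _ _ (J.mul_mem_right _ _ hc))) (J.mul_mem_left _ _ (J.mul_mem_right _ _ h4))) (J.mul_mem_left _ _ (J.mul_mem_right _ _ hb))
  have h9 : (2*(z*z*z) - 2*(x*y)) ∈ J := by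
    have e : (2*(z*z*z) - 2*(x*y)) = (-4 * 1) * ((y*x - 3*(x*y) - z) * 1) + (1 * 1) * ((4*(y*z) + 2*x) * (y)) + (-1 * 1) * ((4*(y*y) - 2*(z*z)) * (z)) + (-2 * 1) * ((8*(x*y) + 2*z) * 1) + (-4 * (y)) * ((z*y - y*z - x) * 1) := by noncomm_ring
    rw [e]
    exact J.add_mem (J.add_mem (J.add_mem (J.add_mem (J.mul_mem_left _ _ (J.mul_mem_right _ _ ha)) (J.mul_mem_left _ _ (J.mul_mem_right _ _ h4))) (J.mul_mem_left _ _ (J.mul_mem_right _ _ h6))) (J.mul_mem_left _ _ (J.mul_mem_right _ _ h7))) (J.mul_mem_left _ _ (J.mul_mem_right _ _ hc))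
  exact ⟨h8, h7, h4, h5, h6, h9⟩

/-- In ℤ⟨x,y,z⟩, with I = ⟨yx−3xy−z, zx−xz+y, zy−yz−x⟩ and
L = ⟨zy−yz−x, zx−xz+y, yx+xy, 2yz+x, 2xz−y, 2y²−z², 4xy+z, x²−y², z³−xy⟩,
we have 2·L ⊆ I ⊆ L. -/
theorem stmt11 :
    let x : FreeAlgebra ℤ (Fin 3) := FreeAlgebra.ι ℤ 0
    let y : FreeAlgebra ℤ (Fin 3) := FreeAlgebra.ι ℤ 1
    let z : FreeAlgebra ℤ (Fin 3) := FreeAlgebra.ι ℤ 2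
    let I := TwoSidedIdeal.span
      {y * x - 3 * (x * y) - z, z * x - x * z + y, z * y - y * z - x}
    let L := TwoSidedIdeal.span
      {z * y - y * z - x, z * x - x * z + y, y * x + x * y,
       2 * (y * z) + x, 2 * (x * z) - y, 2 * (y * y) - z * z,
       4 * (x * y) + z, x * x - y * y, z * z * z - x * y}
    (∀ p ∈ L, 2 * p ∈ I) ∧ (∀ p ∈ I, p ∈ L) := by
  intro x y z I L
  have ha : y * x - 3 * (x * y) - z ∈ I := TwoSidedIdeal.subset_span (by simp)
  have hb : z * x - x * z + y ∈ I := TwoSidedIdeal.subset_span (by simp)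
  have hc : z * y - y * z - x ∈ I := TwoSidedIdeal.subset_span (by simp)
  obtain ⟨h8, h7, h4, h5, h6, h9⟩ := aux11 x y z I ha hb hc
  constructor
  · intro p hp
    let J : TwoSidedIdeal (FreeAlgebra ℤ (Fin 3)) :=
      TwoSidedIdeal.mk' {q | 2 * q ∈ I}
        (by simp)
        (fun {u v} hu hv => by
          simpa [mul_add] using I.add_mem hu hv)
        (fun {u} hu => by
          simpa [mul_neg] using I.neg_mem hu)
        (fun {u v} hv => by
          have : 2 * (u * v) = u * (2 * v) := by noncomm_ring
          rw [Set.mem_setOf_eq, this]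
          exact I.mul_mem_left _ _ hv)
        (fun {u v} hu => by
          have : 2 * (u * v) = (2 * u) * v := by noncomm_ring
          rw [Set.mem_setOf_eq, this]
          exact I.mul_mem_right _ _ hu)
    have hJ : ∀ q : FreeAlgebra ℤ (Fin 3), q ∈ J ↔ 2 * q ∈ I := fun q =>
      TwoSidedIdeal.mem_mk' _ _ _ _ _ _ q
    rw [← hJ]
    refine TwoSidedIdeal.mem_span_iff.mp hp J ?_
    intro q hq
    rw [SetLike.mem_coe, hJ]
    simp only [Set.mem_insert_iff, Set.mem_singleton_iff] at hq
    rcases hq with rfl | rfl | rfl | rfl | rfl | rfl | rfl | rfl | rfl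
    · exact I.mul_mem_left 2 _ hc
    · exact I.mul_mem_left 2 _ hb
    · have e : 2 * (y * x + x * y) = 2 * (y * x - 3 * (x * y) - z) + (8 * (x * y) + 2 * z) := by
        noncomm_ring
      rw [e]; exact I.add_mem (I.mul_mem_left _ _ ha) h7
    · have e : 2 * (2 * (y * z) + x) = 4 * (y * z) + 2 * x := by noncomm_ring
      rw [e]; exact h4
    · have e : 2 * (2 * (x * z) - y) = 4 * (x * z) - 2 * y := by noncomm_ring
      rw [e]; exact h5
    · have e : 2 * (2 * (y * y) - z * z) = 4 * (y * y) - 2 * (z * z) := by noncomm_ring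
      rw [e]; exact h6
    · have e : 2 * (4 * (x * y) + z) = 8 * (x * y) + 2 * z := by noncomm_ring
      rw [e]; exact h7
    · have e : 2 * (x * x - y * y) = 2 * (x * x) - 2 * (y * y) := by noncomm_ring
      rw [e]; exact h8
    · have e : 2 * (z * z * z - x * y) = 2 * (z * z * z) - 2 * (x * y) := by noncomm_ring
      rw [e]; exact h9
  · intro p hp
    refine TwoSidedIdeal.mem_span_iff.mp hp L ?_
    intro q hq
    rw [SetLike.mem_coe]
    simp only [Set.mem_insert_iff, Set.mem_singleton_iff] at hq
    have g3 : y * x + x * y ∈ L := TwoSidedIdeal.subset_span (by simp)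
    have g7 : 4 * (x * y) + z ∈ L := TwoSidedIdeal.subset_span (by simp)
    rcases hq with rfl | rfl | rfl
    · have e : y * x - 3 * (x * y) - z = (y * x + x * y) - (4 * (x * y) + z) := by noncomm_ring
      rw [e]; exact L.sub_mem g3 g7
    · exact TwoSidedIdeal.subset_span (by simp)
    · exact TwoSidedIdeal.subset_span (by simp)
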